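/- arXiv:2407.05136 — 2 statements merged into one kernel-verified Lean document; each statement's English description precedes it below -/
import Mathlib

section
/- There exists a strictly increasing sequence of indices (n_j) such that lim_{j→∞} sup_{(α,x,y)∈E} φ_{n_j}(α, x, y) = sup_{(α,x,y)∈E} αᵀKα = 1. -/
/-!
Put `t = 1/ρ`. Then `φ_n = estimationForm K k t` for a function that is jointly continuous in
`t ≥ 0` and `p ∈ E`, because `K + t k kᵀ` stays positive definite and matrix inversion is
continuous there; at `t = 0` it reduces to `αᵀKα`. As `E` is compact, `t ↦ sup_E estimationForm t`
is then continuous on `[0, ∞)`, so the suprema converge along the whole sequence. The supremum of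
`αᵀKα` on `E` is `1`, attained where `y = 0`.
-/

open Matrix Filter Set Topology

theorem ContinuousOn.matrix_inv {X R n : Type*} [TopologicalSpace X] [Field R]
    [TopologicalSpace R] [IsTopologicalRing R] [ContinuousInv₀ R] [Fintype n] [DecidableEq n]
    {A : X → Matrix n n R} {s : Set X} (hA : ContinuousOn A s) (hdet : ∀ x ∈ s, (A x).det ≠ 0) :
    ContinuousOn (fun x => (A x)⁻¹) s := fun x hx =>
  have hinv : ContinuousAt Ring.inverse (A x).det :=
    Ring.inverse_eq_inv' (G₀ := R) ▸ continuousAt_inv₀ (hdet x hx)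
  (continuousAt_matrix_inv _ hinv).comp_continuousWithinAt (hA x hx)

theorem IsCompact.continuousOn_sSup_image {α β γ : Type*} [ConditionallyCompleteLinearOrder α]
    [TopologicalSpace α] [OrderTopology α] [TopologicalSpace β] [TopologicalSpace γ]
    {f : γ → β → α} {s : Set γ} {K : Set β} (hK : IsCompact K) (hf : ContinuousOn ↿f (s ×ˢ K)) :
    ContinuousOn (fun x => sSup (f x '' K)) s := by
  have hK' : IsCompact (univ : Set K) := isCompact_iff_isCompact_univ.mp hK
  have hf' : Continuous ↿(fun (x : s) (y : K) => f x y) :=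
    hf.comp_continuous (f := fun z : s × K => ((z.1 : γ), (z.2 : β))) (by fun_prop)
      fun z => ⟨z.1.2, z.2.2⟩
  rw [continuousOn_iff_continuous_domRestrict]
  convert hK'.continuous_sSup hf' using 3 with x
  rw [image_univ]
  exact congrArg sSup (image_eq_range _ _)

namespace Matrix

variable {n : Type*} [Fintype n]

theorem PosDef.add_smul_vecMulVec_self {K : Matrix n n ℝ} (hK : K.PosDef) {t : ℝ} (ht : 0 ≤ t)
    (v : n → ℝ) : (K + t • vecMulVec v v).PosDef :=
  hK.add_posSemidef ((posSemidef_vecMulVec_self_star v).smul ht)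

theorem PosDef.exists_dotProduct_mulVec_eq_one [Nonempty n] {K : Matrix n n ℝ} (hK : K.PosDef) :
    ∃ α, α ⬝ᵥ K *ᵥ α = 1 := by
  have hpos : 0 < (1 : n → ℝ) ⬝ᵥ K *ᵥ 1 := by
    simpa using hK.dotProduct_mulVec_pos one_ne_zero
  refine ⟨(√((1 : n → ℝ) ⬝ᵥ K *ᵥ 1))⁻¹ • 1, ?_⟩
  simp only [smul_dotProduct, mulVec_smul, dotProduct_smul, smul_eq_mul, ← mul_assoc, ← mul_inv,
    Real.mul_self_sqrt hpos.le]
  exact inv_mul_cancel₀ hpos.ne'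

theorem PosDef.sSup_dotProduct_mulVec_image_eq_one [Nonempty n] {K : Matrix n n ℝ}
    (hK : K.PosDef) {β : Type*} {X : Set β} (hX : X.Nonempty) (k : β → n → ℝ) :
    sSup ((fun p : (n → ℝ) × β × ℝ => p.1 ⬝ᵥ K *ᵥ p.1) '' {p | p.2.1 ∈ X ∧
      p.1 ⬝ᵥ K *ᵥ p.1 + p.2.2 ^ 2 * (k p.2.1 ⬝ᵥ K *ᵥ k p.2.1) = 1}) = 1 := by
  obtain ⟨x, hx⟩ := hX
  obtain ⟨α, hα⟩ := hK.exists_dotProduct_mulVec_eq_one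
  refine IsGreatest.csSup_eq ⟨⟨(α, x, 0), by simp [hx, hα], hα⟩, ?_⟩
  rintro _ ⟨p, hp, rfl⟩
  have hkK : 0 ≤ k p.2.1 ⬝ᵥ K *ᵥ k p.2.1 := by
    simpa using hK.posSemidef.dotProduct_mulVec_nonneg (k p.2.1)
  nlinarith [hp.2, sq_nonneg p.2.2]

end Matrix

section EstimationForm

variable {n β : Type*} [Fintype n] [DecidableEq n]

noncomputable def estimationForm (K : Matrix n n ℝ) (k : β → n → ℝ) (t : ℝ)
    (p : (n → ℝ) × β × ℝ) : ℝ :=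
  ((t * p.2.2) • k p.2.1 + K *ᵥ p.1) ⬝ᵥ
    ((K + t • vecMulVec (k p.2.1) (k p.2.1))⁻¹ * K * (K + t • vecMulVec (k p.2.1) (k p.2.1))⁻¹) *ᵥ
      ((t * p.2.2) • k p.2.1 + K *ᵥ p.1)

theorem estimationForm_zero {K : Matrix n n ℝ} (hK : IsUnit K.det) (k : β → n → ℝ)
    (p : (n → ℝ) × β × ℝ) : estimationForm K k 0 p = p.1 ⬝ᵥ K *ᵥ p.1 := by
  simp only [estimationForm, zero_mul, zero_smul, zero_add, add_zero, mulVec_mulVec,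
    nonsing_inv_mul K hK, Matrix.one_mul, one_mulVec]
  exact dotProduct_comm _ _

theorem continuousOn_estimationForm [TopologicalSpace β] {K : Matrix n n ℝ} (hK : K.PosDef)
    {k : β → n → ℝ} {X : Set β} (hk : ContinuousOn k X) :
    ContinuousOn ↿(estimationForm K k) (Ici 0 ×ˢ {p | p.2.1 ∈ X}) := by
  have hkX : ContinuousOn (fun z : ℝ × (n → ℝ) × β × ℝ => k z.2.2.1) (Ici 0 ×ˢ {p | p.2.1 ∈ X}) :=
    hk.comp (by fun_prop) fun z hz => hz.2
  have hM : ContinuousOn (fun z : ℝ × (n → ℝ) × β × ℝ =>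
      (K + z.1 • vecMulVec (k z.2.2.1) (k z.2.2.1))⁻¹) (Ici 0 ×ˢ {p | p.2.1 ∈ X}) :=
    ContinuousOn.matrix_inv (by fun_prop) fun z hz =>
      (hK.add_smul_vecMulVec_self hz.1 _).det_pos.ne'
  change ContinuousOn (fun z : ℝ × (n → ℝ) × β × ℝ => estimationForm K k z.1 z.2) _
  unfold estimationForm
  fun_prop

end EstimationForm

theorem stmt_7_general {m I : ℕ} (hm : 1 ≤ m)
    (X : Set (Fin I → ℝ)) (hX : X.Nonempty)
    (k : (Fin I → ℝ) → (Fin m → ℝ)) (hk : ContinuousOn k X)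
    (K : Matrix (Fin m) (Fin m) ℝ) (hK : K.PosDef)
    (ρ : ℕ → ℝ) (hρ : Tendsto ρ atTop atTop)
    (E : Set ((Fin m → ℝ) × (Fin I → ℝ) × ℝ))
    (hE : E = {p | p.2.1 ∈ X ∧
      p.1 ⬝ᵥ K *ᵥ p.1 + p.2.2 ^ 2 * (k p.2.1 ⬝ᵥ K *ᵥ k p.2.1) = 1})
    (hEc : IsCompact E)
    (φ1 : ℕ → ((Fin m → ℝ) × (Fin I → ℝ) × ℝ) → (Fin m → ℝ))
    (hφ1 : ∀ n p, φ1 n p = (p.2.2 / ρ n) • k p.2.1 + K *ᵥ p.1)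
    (φ2 : ℕ → ((Fin m → ℝ) × (Fin I → ℝ) × ℝ) → Matrix (Fin m) (Fin m) ℝ)
    (hφ2 : ∀ n p, φ2 n p = (K + (ρ n)⁻¹ • vecMulVec (k p.2.1) (k p.2.1))⁻¹)
    (φ : ℕ → ((Fin m → ℝ) × (Fin I → ℝ) × ℝ) → ℝ)
    (hφ : ∀ n p, φ n p = φ1 n p ⬝ᵥ (φ2 n p * K * φ2 n p) *ᵥ φ1 n p) :
    ∃ ns : ℕ → ℕ, StrictMono ns ∧
      sSup ((fun p : (Fin m → ℝ) × (Fin I → ℝ) × ℝ => p.1 ⬝ᵥ K *ᵥ p.1) '' E) = 1 ∧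
      Tendsto (fun j => sSup (φ (ns j) '' E)) atTop
        (nhds (sSup ((fun p : (Fin m → ℝ) × (Fin I → ℝ) × ℝ => p.1 ⬝ᵥ K *ᵥ p.1) '' E))) := by
  subst hE
  have : Nonempty (Fin m) := ⟨⟨0, hm⟩⟩
  have hsup := hK.sSup_dotProduct_mulVec_image_eq_one hX k
  have hφ' : ∀ n, φ n = estimationForm K k (ρ n)⁻¹ := fun n => funext fun p => by
    rw [hφ, hφ1, hφ2, div_eq_inv_mul]
    rfl
  have hφ0 : estimationForm K k 0 = fun p => p.1 ⬝ᵥ K *ᵥ p.1 :=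
    funext (estimationForm_zero hK.det_pos.ne'.isUnit k)
  have hcont := hEc.continuousOn_sSup_image
    ((continuousOn_estimationForm hK hk).mono (prod_mono subset_rfl fun p hp => hp.1)) 0
    self_mem_Ici
  have hlim : Tendsto (fun n => (ρ n)⁻¹) atTop (𝓝[≥] 0) :=
    (tendsto_inv_atTop_nhdsGT_zero.comp hρ).mono_right (nhdsWithin_mono _ Ioi_subset_Ici_self)
  refine ⟨id, strictMono_id, hsup, ?_⟩
  rw [← hφ0]
  simp only [hφ', id]
  exact hcont.tendsto.comp hlim

/-- There is a strictly increasing sequence of indices `(n_j)` such that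
`lim_j sup_{(α,x,y)∈E} φ_{n_j}(α,x,y) = sup_{(α,x,y)∈E} αᵀKα = 1`. -/
theorem stmt_7 {m I : ℕ} (hm : 1 ≤ m)
    (X : Set (Fin I → ℝ)) (hX : X.Nonempty)
    (k : (Fin I → ℝ) → (Fin m → ℝ)) (hk : ContinuousOn k X)
    (K : Matrix (Fin m) (Fin m) ℝ) (hK : K.PosDef)
    (ρ : ℕ → ℝ) (hρpos : ∀ n, 0 < ρ n) (hρ : Tendsto ρ atTop atTop)
    (E : Set ((Fin m → ℝ) × (Fin I → ℝ) × ℝ))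
    (hE : E = {p | p.2.1 ∈ X ∧
      p.1 ⬝ᵥ K *ᵥ p.1 + p.2.2 ^ 2 * (k p.2.1 ⬝ᵥ K *ᵥ k p.2.1) = 1})
    (hEc : IsCompact E)
    (φ1 : ℕ → ((Fin m → ℝ) × (Fin I → ℝ) × ℝ) → (Fin m → ℝ))
    (hφ1 : ∀ n p, φ1 n p = (p.2.2 / ρ n) • k p.2.1 + K *ᵥ p.1)
    (φ2 : ℕ → ((Fin m → ℝ) × (Fin I → ℝ) × ℝ) → Matrix (Fin m) (Fin m) ℝ)
    (hφ2 : ∀ n p, φ2 n p = (K + (ρ n)⁻¹ • vecMulVec (k p.2.1) (k p.2.1))⁻¹)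
    (φ : ℕ → ((Fin m → ℝ) × (Fin I → ℝ) × ℝ) → ℝ)
    (hφ : ∀ n p, φ n p = φ1 n p ⬝ᵥ (φ2 n p * K * φ2 n p) *ᵥ φ1 n p) :
    ∃ ns : ℕ → ℕ, StrictMono ns ∧
      sSup ((fun p : (Fin m → ℝ) × (Fin I → ℝ) × ℝ => p.1 ⬝ᵥ K *ᵥ p.1) '' E) = 1 ∧
      Tendsto (fun j => sSup (φ (ns j) '' E)) atTop
        (nhds (sSup ((fun p : (Fin m → ℝ) × (Fin I → ℝ) × ℝ => p.1 ⬝ᵥ K *ᵥ p.1) '' E))) :=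
  stmt_7_general hm X hX k hk K hK ρ hρ E hE hEc φ1 hφ1 φ2 hφ2 φ hφ
end

section
/- Assume in addition that λ_max(K) ≤ 1 and that E is contained in the closed Euclidean unit ball of ℝ^{2m}. Then lim_{n→∞} sup_{α ∈ E} φ_n(α) = sup_{α ∈ E} αᵀKα ≤ 1. -/
/-!
With `t = 1/ρ_n` and `B = diag(K¹, K²)`, the form `φ_n` is `α ↦ αᵀ M(t) α` for
`M(t) = (Kᵀ(tB + 1))ᵀ (tKᵀK + K)⁻¹ K (tKᵀK + K)⁻¹ (Kᵀ(tB + 1))`.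
Matrix inversion is continuous at the invertible `K`, so `M(t) → K K⁻¹ K K⁻¹ K = K` as `t → 0`.
Quadratic forms depend jointly continuously on the matrix and the vector, hence converge
uniformly on the compact set `E`, and uniform convergence moves suprema.
Finally `αᵀKα ≤ λ_max(K) |α|² ≤ 1` on `E`.
-/

open Matrix Filter Topology

theorem dist_sSup_image_le {X : Type*} {F f : X → ℝ} {E : Set X} {ε : ℝ}
    (hf : BddAbove (f '' E)) (hε : 0 ≤ ε) (h : ∀ x ∈ E, dist (F x) (f x) ≤ ε) :
    dist (sSup (F '' E)) (sSup (f '' E)) ≤ ε := by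
  rcases E.eq_empty_or_nonempty with rfl | hne
  · simpa using hε
  have hF_le : ∀ x ∈ E, F x ≤ sSup (f '' E) + ε := fun x hx =>
    calc F x ≤ f x + ε := by linarith [(abs_le.mp (h x hx)).2, Real.dist_eq (F x) (f x)]
      _ ≤ sSup (f '' E) + ε := by gcongr; exact le_csSup hf ⟨x, hx, rfl⟩
  have hF : BddAbove (F '' E) := ⟨_, Set.forall_mem_image.2 hF_le⟩
  rw [Real.dist_eq, abs_le]
  constructor
  · suffices sSup (f '' E) ≤ sSup (F '' E) + ε by linarith
    refine csSup_le (hne.image f) (Set.forall_mem_image.2 fun x hx => ?_)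
    calc f x ≤ F x + ε := by linarith [(abs_le.mp (h x hx)).1, Real.dist_eq (F x) (f x)]
      _ ≤ sSup (F '' E) + ε := by gcongr; exact le_csSup hF ⟨x, hx, rfl⟩
  · linarith [csSup_le (hne.image F) (Set.forall_mem_image.2 hF_le)]

theorem TendstoUniformlyOn.tendsto_sSup_image {ι X : Type*} {l : Filter ι} {F : ι → X → ℝ}
    {f : X → ℝ} {E : Set X} (h : TendstoUniformlyOn F f l E) (hf : BddAbove (f '' E)) :
    Tendsto (fun i => sSup (F i '' E)) l (𝓝 (sSup (f '' E))) := by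
  refine Metric.tendsto_nhds.2 fun ε hε => ?_
  filter_upwards [Metric.tendstoUniformlyOn_iff.1 h (ε / 2) (half_pos hε)] with i hi
  refine (dist_sSup_image_le hf (half_pos hε).le fun x hx => ?_).trans_lt (half_lt_self hε)
  rw [dist_comm]
  exact (hi x hx).le

theorem Filter.Tendsto.tendstoUniformlyOn_of_continuous {ι X Y Z : Type*}
    [TopologicalSpace X] [TopologicalSpace Y] [UniformSpace Z] {l : Filter ι} {g : ι → X} {x : X}
    (hg : Tendsto g l (𝓝 x)) {f : X → Y → Z} (hf : Continuous ↿f) {E : Set Y} (hE : IsCompact E) :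
    TendstoUniformlyOn (fun i => f (g i)) (f x) l E :=
  let f' : C(X, C(Y, Z)) := ContinuousMap.curry ⟨↿f, hf⟩
  ContinuousMap.tendsto_iff_forall_isCompact_tendstoUniformlyOn.1
    ((f'.continuous.tendsto x).comp hg) E hE

section
open scoped MatrixOrder

theorem Matrix.IsHermitian.dotProduct_mulVec_le {n : Type*} [Fintype n] [DecidableEq n]
    {A : Matrix n n ℝ} (hA : A.IsHermitian) {c : ℝ} (h : ∀ i, hA.eigenvalues i ≤ c)
    (x : n → ℝ) : x ⬝ᵥ A *ᵥ x ≤ c * (x ⬝ᵥ x) := by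
  have hle : A ≤ algebraMap ℝ _ c := by
    refine le_algebraMap_of_spectrum_le (fun y hy => ?_) hA
    obtain ⟨i, rfl⟩ := hA.spectrum_real_eq_range_eigenvalues ▸ hy
    exact h i
  have hnonneg := (Matrix.le_iff.1 hle).dotProduct_mulVec_nonneg x
  simpa [Algebra.algebraMap_eq_smul_one, sub_mulVec, smul_mulVec, dotProduct_sub] using hnonneg
end

theorem Matrix.tendsto_smul_add_inv {n : Type*} [Fintype n] [DecidableEq n] {A : Matrix n n ℝ}
    (hA : IsUnit A.det) (C : Matrix n n ℝ) :
    Tendsto (fun t : ℝ => (t • C + A)⁻¹) (𝓝 0) (𝓝 A⁻¹) := by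
  have hinv : ContinuousAt Inv.inv A :=
    continuousAt_matrix_inv A (by
      simpa [Ring.inverse_eq_inv'] using continuousAt_inv₀ hA.ne_zero)
  exact hinv.tendsto.comp <|
    (by fun_prop : Continuous fun t : ℝ => t • C + A).tendsto' 0 A (by simp)

theorem Matrix.dotProduct_transpose_mul_mul_mulVec {m n R : Type*} [Fintype m] [Fintype n]
    [CommSemiring R] (P : Matrix m n R) (A : Matrix m m R) (x : n → R) :
    x ⬝ᵥ (Pᵀ * A * P) *ᵥ x = (P *ᵥ x) ⬝ᵥ A *ᵥ (P *ᵥ x) := by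
  rw [← mulVec_mulVec, ← mulVec_mulVec, dotProduct_mulVec x, vecMul_transpose]

theorem Matrix.smul_fromBlocks_add_one_mulVec {l m R : Type*} [Fintype l] [Fintype m]
    [DecidableEq l] [DecidableEq m] [CommSemiring R]
    (A : Matrix l l R) (D : Matrix m m R) (t : R) (x : l ⊕ m → R) :
    (t • fromBlocks A 0 0 D + 1) *ᵥ x =
      Sum.elim (t • (A *ᵥ (x ∘ Sum.inl)) + x ∘ Sum.inl)
        (t • (D *ᵥ (x ∘ Sum.inr)) + x ∘ Sum.inr) := by
  rw [add_mulVec, smul_mulVec, fromBlocks_mulVec, one_mulVec]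
  ext (i | i) <;> simp

noncomputable def Matrix.fusionFormMatrix {n : Type*} [Fintype n] [DecidableEq n]
    (K B C : Matrix n n ℝ) (t : ℝ) : Matrix n n ℝ :=
  (Kᵀ * (t • B + 1))ᵀ * ((t • C + K)⁻¹ * K * (t • C + K)⁻¹) * (Kᵀ * (t • B + 1))

theorem Matrix.tendsto_fusionFormMatrix {n : Type*} [Fintype n] [DecidableEq n]
    {K : Matrix n n ℝ} (hK : IsUnit K.det) (B C : Matrix n n ℝ) :
    Tendsto (fusionFormMatrix K B C) (𝓝 0) (𝓝 Kᵀ) := by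
  have hP : Tendsto (fun t : ℝ => Kᵀ * (t • B + 1)) (𝓝 0) (𝓝 Kᵀ) := by
    simpa using (by fun_prop : Continuous fun t : ℝ => Kᵀ * (t • B + 1)).tendsto 0
  have hPT := (continuous_id.matrix_transpose.tendsto Kᵀ).comp hP
  have hG := tendsto_smul_add_inv hK C
  have hlim := (hPT.mul ((hG.mul (tendsto_const_nhds (x := K))).mul hG)).mul hP
  rwa [id, transpose_transpose, nonsing_inv_mul _ hK, Matrix.one_mul, mul_nonsing_inv _ hK,
    Matrix.one_mul] at hlim

theorem stmt_9_general {m : ℕ}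
    (K : Matrix (Fin m ⊕ Fin m) (Fin m ⊕ Fin m) ℝ) (hK : K.PosDef)
    (K1 K2 : Matrix (Fin m) (Fin m) ℝ)
    (ρ : ℕ → ℝ)
    (hρ : Tendsto ρ atTop atTop)
    (E : Set ((Fin m ⊕ Fin m) → ℝ)) (hEc : IsCompact E)
    (φ1 : ℕ → ((Fin m ⊕ Fin m) → ℝ) → ((Fin m ⊕ Fin m) → ℝ))
    (hφ1 : ∀ n α, φ1 n α = Kᵀ *ᵥ Sum.elim
      ((ρ n)⁻¹ • (K1 *ᵥ (α ∘ Sum.inl)) + α ∘ Sum.inl)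
      ((ρ n)⁻¹ • (K2 *ᵥ (α ∘ Sum.inr)) + α ∘ Sum.inr))
    (φ2 : ℕ → Matrix (Fin m ⊕ Fin m) (Fin m ⊕ Fin m) ℝ)
    (hφ2 : ∀ n, φ2 n = ((ρ n)⁻¹ • (Kᵀ * K) + K)⁻¹)
    (φ : ℕ → ((Fin m ⊕ Fin m) → ℝ) → ℝ)
    (hφ : ∀ n α, φ n α = φ1 n α ⬝ᵥ (φ2 n * K * φ2 n) *ᵥ φ1 n α)
    (hlmax : ∀ i, hK.isHermitian.eigenvalues i ≤ 1)
    (hEball : ∀ α ∈ E, α ⬝ᵥ α ≤ 1) :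
    Tendsto (fun n => sSup (φ n '' E)) atTop
      (nhds (sSup ((fun α => α ⬝ᵥ K *ᵥ α) '' E))) ∧
    sSup ((fun α => α ⬝ᵥ K *ᵥ α) '' E) ≤ 1 := by
  set M := fusionFormMatrix K (fromBlocks K1 0 0 K2) (Kᵀ * K)
  have hφM : ∀ n α, φ n α = α ⬝ᵥ M (ρ n)⁻¹ *ᵥ α := fun n α => by
    rw [hφ, hφ1, hφ2, ← smul_fromBlocks_add_one_mulVec, mulVec_mulVec]
    exact (dotProduct_transpose_mul_mul_mulVec _ _ _).symm
  have hM : Tendsto M (𝓝 0) (𝓝 K) := by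
    convert tendsto_fusionFormMatrix ((isUnit_iff_isUnit_det K).1 hK.isUnit) _ _ using 2
    simpa using hK.isHermitian.eq.symm
  have hquad : ∀ α ∈ E, α ⬝ᵥ K *ᵥ α ≤ 1 := fun α hα =>
    (hK.isHermitian.dotProduct_mulVec_le hlmax α).trans (by simpa using hEball α hα)
  refine ⟨?_, Real.sSup_le (Set.forall_mem_image.2 hquad) zero_le_one⟩
  have hunif : TendstoUniformlyOn φ (fun α => α ⬝ᵥ K *ᵥ α) atTop E :=
    ((hM.comp hρ.inv_tendsto_atTop).tendstoUniformlyOn_of_continuous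
      (f := fun A α => α ⬝ᵥ A *ᵥ α) (by fun_prop) hEc).congr
      (Eventually.of_forall fun n α _ => (hφM n α).symm)
  exact hunif.tendsto_sSup_image ⟨1, Set.forall_mem_image.2 hquad⟩

/-- With the fusion-center squared-norm functionals `φ_n`, if `λ_max(K) ≤ 1`
and `E` is contained in the closed Euclidean unit ball of `ℝ^{2m}`, then
`lim_n sup_{α∈E} φ_n(α) = sup_{α∈E} αᵀKα ≤ 1`. Vectors in `ℝ^{2m}` are indexed by
`Fin m ⊕ Fin m`, with blocks `α¹ = α ∘ Sum.inl` and `α² = α ∘ Sum.inr`. -/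
theorem stmt_9 {m : ℕ} (hm : 1 ≤ m)
    (K : Matrix (Fin m ⊕ Fin m) (Fin m ⊕ Fin m) ℝ) (hK : K.PosDef)
    (K1 K2 : Matrix (Fin m) (Fin m) ℝ) (hK1 : K1.PosSemidef) (hK2 : K2.PosSemidef)
    (ρ : ℕ → ℝ) (hρpos : ∀ n, 0 < ρ n) (hρmono : Monotone ρ)
    (hρ : Tendsto ρ atTop atTop)
    (E : Set ((Fin m ⊕ Fin m) → ℝ)) (hEc : IsCompact E)
    (φ1 : ℕ → ((Fin m ⊕ Fin m) → ℝ) → ((Fin m ⊕ Fin m) → ℝ))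
    (hφ1 : ∀ n α, φ1 n α = Kᵀ *ᵥ Sum.elim
      ((ρ n)⁻¹ • (K1 *ᵥ (α ∘ Sum.inl)) + α ∘ Sum.inl)
      ((ρ n)⁻¹ • (K2 *ᵥ (α ∘ Sum.inr)) + α ∘ Sum.inr))
    (φ2 : ℕ → Matrix (Fin m ⊕ Fin m) (Fin m ⊕ Fin m) ℝ)
    (hφ2 : ∀ n, φ2 n = ((ρ n)⁻¹ • (Kᵀ * K) + K)⁻¹)
    (φ : ℕ → ((Fin m ⊕ Fin m) → ℝ) → ℝ)
    (hφ : ∀ n α, φ n α = φ1 n α ⬝ᵥ (φ2 n * K * φ2 n) *ᵥ φ1 n α)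
    (hlmax : ∀ i, hK.isHermitian.eigenvalues i ≤ 1)
    (hEball : ∀ α ∈ E, α ⬝ᵥ α ≤ 1) :
    Tendsto (fun n => sSup (φ n '' E)) atTop
      (nhds (sSup ((fun α => α ⬝ᵥ K *ᵥ α) '' E))) ∧
    sSup ((fun α => α ⬝ᵥ K *ᵥ α) '' E) ≤ 1 :=
  stmt_9_general K hK K1 K2 ρ hρ E hEc φ1 hφ1 φ2 hφ2 φ hφ hlmax hEball
end
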